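/- arXiv:0906.1126 — 3 statements merged into one kernel-verified Lean document; each statement's English description precedes it below -/
import Mathlib

section
/- The independence number of the square of T_{5,7} = C_5 □ C_7 equals 5. -/
open SimpleGraph

/-- The square of a simple graph `G`: distinct vertices are adjacent iff they are
adjacent in `G` or have a common neighbor in `G` (i.e. are at distance at most 2). -/
def SimpleGraph.square {V : Type*} (G : SimpleGraph V) : SimpleGraph V where
  Adj u v := u ≠ v ∧ (G.Adj u v ∨ ∃ w, G.Adj u w ∧ G.Adj w v)
  symm := ⟨fun u v => by
    rintro ⟨h, h' | ⟨w, hw1, hw2⟩⟩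
    exacts [⟨h.symm, Or.inl h'.symm⟩, ⟨h.symm, Or.inr ⟨w, hw2.symm, hw1.symm⟩⟩]⟩
  loopless := ⟨fun v => by simp⟩

/-- The toroidal grid `T_{m,n} = C_m □ C_n`. -/
def toroidalGrid (m n : ℕ) : SimpleGraph (Fin m × Fin n) :=
  SimpleGraph.cycleGraph m □ SimpleGraph.cycleGraph n

/-- The independence number of a graph: the maximum size of an independent set,
i.e. the clique number of the complement graph. -/
noncomputable def SimpleGraph.indepNum' {V : Type*} (G : SimpleGraph V) : ℕ :=
  Gᶜ.cliqueNum

/-! An independent set of `(C₅ □ C₇)²` meets every column at most once, because `C₅` has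
diameter 2. If it had six vertices, six cyclically consecutive columns `c+1, …, c+6` would be
occupied, by rows `r₁, …, r₆`. Rows in neighbouring columns differ by `±2` mod 5 and rows two
columns apart are distinct, so all five steps have the same sign and `r₆ = r₁ ± 10 = r₁`; but
columns `c+6` and `c+1` are at distance 2 in `C₇`. The five vertices `(i, 3i mod 7)` are at
pairwise distance at least 3. -/

namespace SimpleGraph

variable {V α β : Type*}

instance [Fintype V] [DecidableEq V] (G : SimpleGraph V) [DecidableRel G.Adj] :
    DecidableRel G.square.Adj :=
  fun _ _ => inferInstanceAs (Decidable (_ ∧ _))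

instance [DecidableEq α] [DecidableEq β] (G : SimpleGraph α) (H : SimpleGraph β)
    [DecidableRel G.Adj] [DecidableRel H.Adj] : DecidableRel (G □ H).Adj :=
  fun _ _ => inferInstanceAs (Decidable (_ ∨ _))

lemma le_square (G : SimpleGraph V) : G ≤ G.square :=
  fun _ _ h => ⟨h.ne, Or.inl h⟩

section BoxProd

variable {G : SimpleGraph α} {H : SimpleGraph β} {a b : α} {x y : β}

lemma square_boxProd_adj_left (h : G.square.Adj a b) (x : β) :
    (G □ H).square.Adj (a, x) (b, x) := by
  obtain ⟨hne, h | ⟨w, haw, hwb⟩⟩ := h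
  · exact le_square _ (boxProd_adj_left.2 h)
  · exact ⟨by simpa using hne, Or.inr ⟨(w, x), boxProd_adj_left.2 haw, boxProd_adj_left.2 hwb⟩⟩

lemma square_boxProd_adj_right (h : H.square.Adj x y) (a : α) :
    (G □ H).square.Adj (a, x) (a, y) := by
  obtain ⟨hne, h | ⟨w, hxw, hwy⟩⟩ := h
  · exact le_square _ (boxProd_adj_right.2 h)
  · exact ⟨by simpa using hne, Or.inr ⟨(a, w), boxProd_adj_right.2 hxw, boxProd_adj_right.2 hwy⟩⟩

lemma square_boxProd_adj_of_adj_of_adj (ha : G.Adj a b) (hx : H.Adj x y) :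
    (G □ H).square.Adj (a, x) (b, y) :=
  ⟨by simp [ha.ne], Or.inr ⟨(b, x), boxProd_adj_left.2 ha, boxProd_adj_right.2 hx⟩⟩

variable {s : Set (α × β)}

lemma IsIndepSet.injOn_snd (hs : (G □ H).square.IsIndepSet s) (hG : G.square = ⊤) :
    s.InjOn Prod.snd := by
  rintro ⟨a, x⟩ hax ⟨b, y⟩ hby (rfl : x = y)
  by_contra hne
  have hab : a ≠ b := fun h => hne (by rw [h])
  exact hs hax hby hne (square_boxProd_adj_left (hG ▸ hab : G.square.Adj a b) x)

lemma IsIndepSet.fst_ne_of_square_adj_snd (hs : (G □ H).square.IsIndepSet s)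
    (hax : (a, x) ∈ s) (hby : (b, y) ∈ s) (h : H.square.Adj x y) : a ≠ b := by
  rintro rfl
  exact hs hax hby (by simpa using h.ne) (square_boxProd_adj_right h a)

lemma IsIndepSet.compl_adj_fst_of_adj_snd (hs : (G □ H).square.IsIndepSet s)
    (hax : (a, x) ∈ s) (hby : (b, y) ∈ s) (h : H.Adj x y) : Gᶜ.Adj a b :=
  ⟨hs.fst_ne_of_square_adj_snd hax hby (le_square H h),
    fun ha => hs hax hby (by simp [ha.ne]) (square_boxProd_adj_of_adj_of_adj ha h)⟩

end BoxProd

lemma cycleGraph_adj_add_one {n : ℕ} (j : Fin (n + 2)) : (cycleGraph (n + 2)).Adj j (j + 1) :=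
  cycleGraph_adj.2 (Or.inr (add_sub_cancel_left j 1))

lemma cycleGraph_square_adj_add_two {n : ℕ} (j : Fin (n + 3)) :
    (cycleGraph (n + 3)).square.Adj j (j + 2) := by
  refine ⟨?_, Or.inr ⟨j + 1, cycleGraph_adj_add_one j, ?_⟩⟩
  · intro h
    have h2 : (2 : Fin (n + 3)) = 0 := left_eq_add.1 h
    simp [Fin.ext_iff, Nat.mod_eq_of_lt (show 2 < n + 3 by omega)] at h2
  · have h : j + 2 = j + 1 + 1 := by abel
    exact h ▸ cycleGraph_adj_add_one (j + 1)

lemma cycleGraph_five_square : (cycleGraph 5).square = ⊤ := by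
  ext a b
  revert a b
  decide

/-- `(C₅)ᶜ` is the pentagram: its steps are `±2`, and two consecutive steps that do not
backtrack have the same sign. -/
lemma compl_cycleGraph_five_sub_eq {a b c : Fin 5} (hab : (cycleGraph 5)ᶜ.Adj a b)
    (hbc : (cycleGraph 5)ᶜ.Adj b c) (hca : c ≠ a) : c - b = b - a := by
  revert a b c
  decide

lemma compl_cycleGraph_five_nonbacktracking_closed (r : ℕ → Fin 5)
    (hadj : ∀ k < 5, (cycleGraph 5)ᶜ.Adj (r k) (r (k + 1)))
    (hnb : ∀ k < 4, r (k + 2) ≠ r k) : r 5 = r 0 := by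
  have hconst : ∀ k < 5, r (k + 1) - r k = r 1 - r 0 := by
    intro k hk
    induction k with
    | zero => rfl
    | succ k ih =>
      rw [← ih (by omega)]
      exact compl_cycleGraph_five_sub_eq (hadj k (by omega)) (hadj (k + 1) hk) (hnb k (by omega))
  have htelescope : r 5 - r 0 = 5 • (r 1 - r 0) := by
    rw [← Finset.sum_range_sub, Finset.sum_congr rfl fun k hk => hconst k (Finset.mem_range.1 hk),
      Finset.sum_const, Finset.card_range]
  have hchar : ∀ x : Fin 5, 5 • x = 0 := by decide
  rwa [hchar, sub_eq_zero] at htelescope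

end SimpleGraph

lemma Finset.exists_forall_ne_mk_mem_of_card_le {α β : Type*} [Fintype β] [Nonempty α]
    [Nonempty β] (s : Finset (α × β)) (hinj : Set.InjOn Prod.snd (s : Set (α × β)))
    (hcard : Fintype.card β ≤ s.card + 1) : ∃ (c : β) (r : β → α), ∀ j ≠ c, (r j, j) ∈ s := by
  classical
  obtain ⟨c, hc⟩ := card_le_one_iff_subset_singleton.1
    (show (s.image Prod.snd)ᶜ.card ≤ 1 by rw [card_compl, card_image_of_injOn hinj]; omega)
  have hrow : ∀ j, ∃ a, j ≠ c → (a, j) ∈ s := fun j => by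
    by_cases hj : j = c
    · exact ⟨Classical.arbitrary α, fun h => absurd hj h⟩
    · obtain ⟨⟨a, j'⟩, ha, rfl⟩ := mem_image.1 <|
        by_contra fun hjs => hj (mem_singleton.1 (hc (mem_compl.2 hjs)))
      exact ⟨a, fun _ => ha⟩
  choose r hr using hrow
  exact ⟨c, r, hr⟩

instance (m n : ℕ) : DecidableRel (toroidalGrid m n).Adj :=
  inferInstanceAs (DecidableRel (cycleGraph m □ cycleGraph n).Adj)

open Fin.NatCast in
lemma toroidalGrid_five_seven_square_card_le_of_isIndepSet {s : Finset (Fin 5 × Fin 7)}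
    (hs : (toroidalGrid 5 7).square.IsIndepSet s) : s.card ≤ 5 := by
  by_contra! hcard
  obtain ⟨c, r, hr⟩ := s.exists_forall_ne_mk_mem_of_card_le
    (hs.injOn_snd cycleGraph_five_square) (by simp only [Fintype.card_fin]; omega)
  set col : ℕ → Fin 7 := fun k => c + 1 + (k : Fin 7)
  have hmem : ∀ k < 6, (r (col k), col k) ∈ s := by
    have hne : ∀ c : Fin 7, ∀ k : ℕ, k < 6 → c + 1 + (k : Fin 7) ≠ c := by decide
    exact fun k hk => hr _ (hne c k hk)
  have hadj : ∀ k < 5, (cycleGraph 5)ᶜ.Adj (r (col k)) (r (col (k + 1))) := by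
    intro k hk
    have h : (cycleGraph 7).Adj (col k) (col (k + 1)) := by
      simpa [col, add_assoc] using cycleGraph_adj_add_one (n := 5) (col k)
    exact hs.compl_adj_fst_of_adj_snd (hmem k (by omega)) (hmem (k + 1) (by omega)) h
  have hnb : ∀ k < 4, r (col (k + 2)) ≠ r (col k) := by
    intro k hk
    have h : (cycleGraph 7).square.Adj (col k) (col (k + 2)) := by
      simpa [col, add_assoc] using cycleGraph_square_adj_add_two (n := 4) (col k)
    exact (hs.fst_ne_of_square_adj_snd (hmem k (by omega)) (hmem (k + 2) (by omega)) h).symm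
  have hwrap : (cycleGraph 7).square.Adj (col 5) (col 0) := by
    have hcol : ∀ c : Fin 7, c + 1 + ((0 : ℕ) : Fin 7) = c + 1 + ((5 : ℕ) : Fin 7) + 2 := by
      decide
    have h := cycleGraph_square_adj_add_two (n := 4) (col 5)
    rwa [← hcol c] at h
  exact hs.fst_ne_of_square_adj_snd (hmem 5 (by omega)) (hmem 0 (by omega)) hwrap
    (compl_cycleGraph_five_nonbacktracking_closed (fun k => r (col k)) hadj hnb)

lemma toroidalGrid_five_seven_square_isIndepSet :
    (toroidalGrid 5 7).square.IsIndepSet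
      (({(0, 0), (1, 3), (2, 6), (3, 2), (4, 5)} : Finset (Fin 5 × Fin 7)) : Set (Fin 5 × Fin 7)) := by
  decide

theorem stmt16 : (toroidalGrid 5 7).square.indepNum' = 5 := by
  rw [indepNum', cliqueNum_compl]
  refine le_antisymm ?_ ?_
  · obtain ⟨s, hs⟩ := (toroidalGrid 5 7).square.exists_isNIndepSet_indepNum
    exact hs.card_eq ▸ toroidalGrid_five_seven_square_card_le_of_isIndepSet hs.isIndepSet
  · exact toroidalGrid_five_seven_square_isIndepSet.card_le_indepNum
end

section
/- The chromatic numbers of the squares of T_{7,7} = C_7 □ C_7 and T_{7,8} = C_7 □ C_8 both equal 7. -/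
open SimpleGraph

/-!
An independent set `S` of the square of `T_{7,n}` meets each column, a copy of `C_7`, in points
at cyclic distance at least `3`, so in at most two points; comparing neighbouring columns
through a finite check on `C_7` forbids the column-size patterns `(2,2)`, `(≥1,2,≥1)` and
`(2,≥1,2)`. Under these rules any six consecutive column sizes satisfy
`r₀ + 2 (r₁ + r₂ + r₃ + r₄) + r₅ ≤ 12`, and averaging over all rotations gives
`5 |S| ≤ 6 n`. Hence `|S| ≤ 8` for `n = 7` and `|S| ≤ 9` for `n = 8`, too small for six colour
classes to cover `49` or `56` vertices. Seven colours do suffice: colour `(i, j)` by `i + f j`,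
where consecutive shifts `f (j + 1) - f j` avoid `0` and `±1` and `f (j + 2) ≠ f j`.
-/

instance SimpleGraph.boxProdDecidableRel {α β : Type*} [DecidableEq α] [DecidableEq β]
    {G : SimpleGraph α} {H : SimpleGraph β} [DecidableRel G.Adj] [DecidableRel H.Adj] :
    DecidableRel (G □ H).Adj :=
  fun _ _ => decidable_of_iff' _ boxProd_adj

instance SimpleGraph.squareDecidableRel {V : Type*} [Fintype V] [DecidableEq V]
    (G : SimpleGraph V) [DecidableRel G.Adj] : DecidableRel G.square.Adj :=
  fun u v =>
    inferInstanceAs (Decidable (u ≠ v ∧ (G.Adj u v ∨ ∃ w, G.Adj u w ∧ G.Adj w v)))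

instance toroidalGrid.decidableRel (m n : ℕ) : DecidableRel (toroidalGrid m n).Adj :=
  inferInstanceAs (DecidableRel (cycleGraph m □ cycleGraph n).Adj)

namespace SimpleGraph

variable {V : Type*} {G : SimpleGraph V} {u v w : V}

lemma square_adj_of_adj (h : G.Adj u v) : G.square.Adj u v := ⟨h.ne, Or.inl h⟩

lemma square_adj_of_adj_of_adj (huw : G.Adj u w) (hwv : G.Adj w v) (huv : u ≠ v) :
    G.square.Adj u v :=
  ⟨huv, Or.inr ⟨w, huw, hwv⟩⟩

lemma IsIndepSet.not_adj_of_mem {s : Set V} (hs : G.IsIndepSet s) (hu : u ∈ s) (hv : v ∈ s) :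
    ¬G.Adj u v :=
  fun h => hs hu hv h.ne h

lemma not_colorable_of_forall_isIndepSet_card_le [Fintype V] {k a : ℕ}
    (h : ∀ s : Finset V, G.IsIndepSet s → s.card ≤ a) (hk : k * a < Fintype.card V) :
    ¬G.Colorable k := by
  classical
  rintro ⟨C⟩
  obtain ⟨c, hc⟩ := Fintype.exists_lt_card_fiber_of_mul_lt_card C (by simpa using hk)
  refine (h _ fun u hu v hv _ => C.not_adj_of_mem_colorClass (c := c) ?_ ?_).not_gt hc
  · exact (Finset.mem_filter.mp hu).2
  · exact (Finset.mem_filter.mp hv).2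

end SimpleGraph

namespace Fin

def Apart {n : ℕ} (k : ℕ) (a b : Fin n) : Prop := k ≤ (b - a).val ∧ k ≤ (a - b).val

instance {n : ℕ} (k : ℕ) (a b : Fin n) : Decidable (Apart k a b) :=
  inferInstanceAs (Decidable (_ ∧ _))

variable {n : ℕ} [NeZero n]

lemma val_sub_eq_zero_iff {a b : Fin n} : (b - a).val = 0 ↔ b = a := by
  rw [← Fin.val_zero n, Fin.val_inj, sub_eq_zero]

lemma val_sub_eq_one_iff (hn : 2 ≤ n) {a b : Fin n} : (b - a).val = 1 ↔ b = a + 1 := by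
  rw [← sub_eq_iff_eq_add', ← Fin.val_inj, Fin.val_one', Nat.mod_eq_of_lt hn]

lemma val_sub_eq_two_iff (hn : 3 ≤ n) {a b : Fin n} : (b - a).val = 2 ↔ b = a + 2 := by
  rw [← sub_eq_iff_eq_add', ← Fin.val_inj]
  simp [Nat.mod_eq_of_lt hn]

lemma val_sub_eq_zero_comm {a b : Fin n} : (b - a).val = 0 ↔ (a - b).val = 0 := by
  rw [val_sub_eq_zero_iff, val_sub_eq_zero_iff, eq_comm]

lemma apart_two_iff (hn : 2 ≤ n) {a b : Fin n} :
    Apart 2 a b ↔ b ≠ a ∧ b ≠ a + 1 ∧ a ≠ b + 1 := by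
  simp only [Apart, ne_eq, ← val_sub_eq_zero_iff, ← val_sub_eq_one_iff hn]
  have := val_sub_eq_zero_comm (a := a) (b := b)
  omega

lemma apart_three_iff (hn : 3 ≤ n) {a b : Fin n} :
    Apart 3 a b ↔ b ≠ a ∧ b ≠ a + 1 ∧ a ≠ b + 1 ∧ b ≠ a + 2 ∧ a ≠ b + 2 := by
  simp only [Apart, ne_eq, ← val_sub_eq_zero_iff, ← val_sub_eq_one_iff (by omega : 2 ≤ n),
    ← val_sub_eq_two_iff hn]
  have := val_sub_eq_zero_comm (a := a) (b := b)
  omega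

lemma add_one_ne_self (hn : 2 ≤ n) (a : Fin n) : a + 1 ≠ a := by
  rw [Ne, ← val_sub_eq_zero_iff, (val_sub_eq_one_iff hn).mpr rfl]
  exact one_ne_zero

lemma add_one_add_one (a : Fin n) : a + 1 + 1 = a + 2 := by
  simp [add_assoc, Fin.ext_iff, Fin.val_add]

lemma add_two_ne_self (hn : 3 ≤ n) (a : Fin n) : a + 2 ≠ a := by
  rw [Ne, ← val_sub_eq_zero_iff, (val_sub_eq_two_iff hn).mpr rfl]
  exact two_ne_zero

end Fin

section Torus

variable {m n : ℕ}

lemma cycleGraph_adj_add_one [NeZero n] (hn : 2 ≤ n) (a : Fin n) :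
    (cycleGraph n).Adj a (a + 1) :=
  cycleGraph_adj'.mpr <| Or.inr <| (Fin.val_sub_eq_one_iff hn).mpr rfl

lemma toroidalGrid_adj_add_one_fst [NeZero m] (hm : 2 ≤ m) (i : Fin m) (j : Fin n) :
    (toroidalGrid m n).Adj (i, j) (i + 1, j) :=
  boxProd_adj_left.mpr (cycleGraph_adj_add_one hm i)

lemma toroidalGrid_adj_add_one_snd [NeZero n] (hn : 2 ≤ n) (i : Fin m) (j : Fin n) :
    (toroidalGrid m n).Adj (i, j) (i, j + 1) :=
  boxProd_adj_right.mpr (cycleGraph_adj_add_one hn j)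

lemma toroidalGrid_square_adj_add_two_fst [NeZero m] (hm : 3 ≤ m) (i : Fin m) (j : Fin n) :
    (toroidalGrid m n).square.Adj (i, j) (i + 2, j) := by
  refine square_adj_of_adj_of_adj (toroidalGrid_adj_add_one_fst (by omega) i j) ?_ ?_
  · rw [← Fin.add_one_add_one]
    exact toroidalGrid_adj_add_one_fst (by omega) (i + 1) j
  · exact fun h => Fin.add_two_ne_self hm i (congrArg Prod.fst h).symm

lemma toroidalGrid_square_adj_add_two_snd [NeZero n] (hn : 3 ≤ n) (i : Fin m) (j : Fin n) :
    (toroidalGrid m n).square.Adj (i, j) (i, j + 2) := by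
  refine square_adj_of_adj_of_adj (toroidalGrid_adj_add_one_snd (by omega) i j) ?_ ?_
  · rw [← Fin.add_one_add_one]
    exact toroidalGrid_adj_add_one_snd (by omega) i (j + 1)
  · exact fun h => Fin.add_two_ne_self hn j (congrArg Prod.snd h).symm

lemma toroidalGrid_square_adj_add_one_add_one [NeZero m] [NeZero n] (hm : 2 ≤ m) (hn : 2 ≤ n)
    (i : Fin m) (j : Fin n) : (toroidalGrid m n).square.Adj (i, j) (i + 1, j + 1) :=
  square_adj_of_adj_of_adj (toroidalGrid_adj_add_one_snd hn i j)
    (toroidalGrid_adj_add_one_fst hm i (j + 1))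
    fun h => Fin.add_one_ne_self hn j (congrArg Prod.snd h).symm

lemma toroidalGrid_square_adj_add_one_fst_add_one_snd [NeZero m] [NeZero n]
    (hm : 2 ≤ m) (hn : 2 ≤ n) (i : Fin m) (j : Fin n) :
    (toroidalGrid m n).square.Adj (i + 1, j) (i, j + 1) :=
  square_adj_of_adj_of_adj (toroidalGrid_adj_add_one_fst hm i j).symm
    (toroidalGrid_adj_add_one_snd hn i j)
    fun h => Fin.add_one_ne_self hn j (congrArg Prod.snd h).symm

end Torus

section Columns

variable {m n : ℕ} {S : Finset (Fin m × Fin n)}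

def column (S : Finset (Fin m × Fin n)) (j : Fin n) : Finset (Fin m) :=
  {i | (i, j) ∈ S}

lemma mem_column {i : Fin m} {j : Fin n} : i ∈ column S j ↔ (i, j) ∈ S := by
  simp [column]

lemma sum_card_column (S : Finset (Fin m × Fin n)) : ∑ j, (column S j).card = S.card := by
  simp only [column, Finset.card_filter]
  rw [← Fintype.sum_prod_type_right (f := fun v => if v ∈ S then 1 else 0)]
  simp

lemma apart_three_of_mem_column [NeZero m] (hS : (toroidalGrid m n).square.IsIndepSet S)
    (hm : 3 ≤ m) ⦃a b : Fin m⦄ ⦃j : Fin n⦄ (ha : a ∈ column S j) (hb : b ∈ column S j)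
    (hab : a ≠ b) :
    Fin.Apart 3 a b := by
  rw [mem_column] at ha hb
  have no_edge {x y : Fin m} (hx : (x, j) ∈ S) (hy : (y, j) ∈ S) :=
    hS.not_adj_of_mem (Finset.mem_coe.mpr hx) (Finset.mem_coe.mpr hy)
  rw [Fin.apart_three_iff hm]
  refine ⟨hab.symm, ?_, ?_, ?_, ?_⟩ <;> rintro rfl
  · exact no_edge ha hb (square_adj_of_adj (toroidalGrid_adj_add_one_fst (by omega) a j))
  · exact no_edge hb ha (square_adj_of_adj (toroidalGrid_adj_add_one_fst (by omega) b j))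
  · exact no_edge ha hb (toroidalGrid_square_adj_add_two_fst hm a j)
  · exact no_edge hb ha (toroidalGrid_square_adj_add_two_fst hm b j)

lemma apart_two_of_mem_column [NeZero m] [NeZero n]
    (hS : (toroidalGrid m n).square.IsIndepSet S) (hm : 2 ≤ m) (hn : 2 ≤ n) ⦃a b : Fin m⦄
    ⦃j : Fin n⦄ (ha : a ∈ column S j) (hb : b ∈ column S (j + 1)) :
    Fin.Apart 2 a b := by
  rw [mem_column] at ha hb
  have no_edge := hS.not_adj_of_mem (Finset.mem_coe.mpr ha) (Finset.mem_coe.mpr hb)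
  rw [Fin.apart_two_iff hm]
  refine ⟨?_, ?_, ?_⟩ <;> rintro rfl
  · exact no_edge (square_adj_of_adj (toroidalGrid_adj_add_one_snd hn _ j))
  · exact no_edge (toroidalGrid_square_adj_add_one_add_one hm hn a j)
  · exact no_edge (toroidalGrid_square_adj_add_one_fst_add_one_snd hm hn b j)

lemma ne_of_mem_column [NeZero n] (hS : (toroidalGrid m n).square.IsIndepSet S) (hn : 3 ≤ n)
    ⦃a b : Fin m⦄ ⦃j : Fin n⦄ (ha : a ∈ column S j) (hb : b ∈ column S (j + 2)) :
    a ≠ b := by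
  rw [mem_column] at ha hb
  rintro rfl
  exact hS.not_adj_of_mem (Finset.mem_coe.mpr ha) (Finset.mem_coe.mpr hb)
    (toroidalGrid_square_adj_add_two_snd hn a j)

end Columns

section Profile

variable {ι : Type*}

structure IsAdmissibleProfile (σ : Equiv.Perm ι) (r : ι → ℕ) : Prop where
  le_two : ∀ j, r j ≤ 2
  not_two_two : ∀ j, ¬(2 ≤ r j ∧ 2 ≤ r (σ j))
  not_one_two_one : ∀ j, ¬(1 ≤ r j ∧ 2 ≤ r (σ j) ∧ 1 ≤ r (σ (σ j)))
  not_two_one_two : ∀ j, ¬(2 ≤ r j ∧ 1 ≤ r (σ j) ∧ 2 ≤ r (σ (σ j)))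

variable {σ : Equiv.Perm ι} {r : ι → ℕ}

/-- The resulting density `12 / 10` is optimal: the periodic profile `2, 0, 2, 1, 1` attains it. -/
lemma IsAdmissibleProfile.window_le (h : IsAdmissibleProfile σ r) (j : ι) :
    r j + 2 * (r (σ j) + r ((σ ^ 2) j) + r ((σ ^ 3) j) + r ((σ ^ 4) j)) + r ((σ ^ 5) j) ≤
      12 := by
  simp only [pow_succ', pow_zero, mul_one, Equiv.Perm.mul_apply]
  have := h.le_two j; have := h.le_two (σ j); have := h.le_two (σ (σ j))
  have := h.le_two (σ (σ (σ j))); have := h.le_two (σ (σ (σ (σ j))))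
  have := h.le_two (σ (σ (σ (σ (σ j)))))
  have := h.not_two_two j; have := h.not_two_two (σ j); have := h.not_two_two (σ (σ j))
  have := h.not_two_two (σ (σ (σ j))); have := h.not_two_two (σ (σ (σ (σ j))))
  have := h.not_one_two_one j; have := h.not_one_two_one (σ j)
  have := h.not_one_two_one (σ (σ j)); have := h.not_one_two_one (σ (σ (σ j)))
  have := h.not_two_one_two j; have := h.not_two_one_two (σ j)
  have := h.not_two_one_two (σ (σ j)); have := h.not_two_one_two (σ (σ (σ j)))
  omega

lemma IsAdmissibleProfile.five_mul_sum_le [Fintype ι] (h : IsAdmissibleProfile σ r) :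
    5 * ∑ j, r j ≤ 6 * Fintype.card ι := by
  have shift (k : ℕ) : ∑ j, r ((σ ^ k) j) = ∑ j, r j := Equiv.sum_comp (σ ^ k) r
  have windows := Finset.sum_le_sum fun j (_ : j ∈ Finset.univ) => h.window_le j
  simp only [Finset.sum_add_distrib, ← Finset.mul_sum, shift, Equiv.sum_comp σ r,
    Finset.sum_const, Finset.card_univ, smul_eq_mul] at windows
  omega

end Profile

section SevenRows

variable {n : ℕ} {S : Finset (Fin 7 × Fin n)}

lemma card_column_le_two (hS : (toroidalGrid 7 n).square.IsIndepSet S) (j : Fin n) :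
    (column S j).card ≤ 2 := by
  have key : ∀ a b c : Fin 7, Fin.Apart 3 a b → Fin.Apart 3 a c → ¬Fin.Apart 3 b c := by
    decide
  by_contra! h
  obtain ⟨a, ha, b, hb, c, hc, hab, hac, hbc⟩ := Finset.two_lt_card.mp h
  have apart := apart_three_of_mem_column hS (by norm_num)
  exact key a b c (apart ha hb hab) (apart ha hc hac) (apart hb hc hbc)

lemma card_column_not_two_two [NeZero n] (hS : (toroidalGrid 7 n).square.IsIndepSet S)
    (hn : 2 ≤ n) (j : Fin n) : ¬(2 ≤ (column S j).card ∧ 2 ≤ (column S (j + 1)).card) := by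
  have key : ∀ a a' b b' : Fin 7, Fin.Apart 3 a a' → Fin.Apart 3 b b' →
      Fin.Apart 2 a b → Fin.Apart 2 a b' → Fin.Apart 2 a' b → ¬Fin.Apart 2 a' b' := by
    decide
  rintro ⟨h₀, h₁⟩
  obtain ⟨a, ha, a', ha', haa'⟩ := Finset.one_lt_card.mp h₀
  obtain ⟨b, hb, b', hb', hbb'⟩ := Finset.one_lt_card.mp h₁
  have apart₃ := apart_three_of_mem_column hS (by norm_num)
  have apart₂ := apart_two_of_mem_column hS (by norm_num) hn
  exact key a a' b b' (apart₃ ha ha' haa') (apart₃ hb hb' hbb') (apart₂ ha hb)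
    (apart₂ ha hb') (apart₂ ha' hb) (apart₂ ha' hb')

lemma card_column_not_one_two_one [NeZero n] (hS : (toroidalGrid 7 n).square.IsIndepSet S)
    (hn : 3 ≤ n) (j : Fin n) :
    ¬(1 ≤ (column S j).card ∧ 2 ≤ (column S (j + 1)).card ∧
      1 ≤ (column S (j + 2)).card) := by
  have key : ∀ a b b' c : Fin 7, Fin.Apart 3 b b' → Fin.Apart 2 a b → Fin.Apart 2 a b' →
      Fin.Apart 2 b c → Fin.Apart 2 b' c → a = c := by
    decide
  rintro ⟨h₀, h₁, h₂⟩
  obtain ⟨a, ha⟩ := Finset.card_pos.mp h₀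
  obtain ⟨b, hb, b', hb', hbb'⟩ := Finset.one_lt_card.mp h₁
  obtain ⟨c, hc⟩ := Finset.card_pos.mp h₂
  have apart₂ := apart_two_of_mem_column hS (by norm_num) (by omega)
  have hc₁ : c ∈ column S (j + 1 + 1) := by rwa [Fin.add_one_add_one]
  exact ne_of_mem_column hS hn ha hc <| key a b b' c
    (apart_three_of_mem_column hS (by norm_num) hb hb' hbb') (apart₂ ha hb) (apart₂ ha hb')
    (apart₂ hb hc₁) (apart₂ hb' hc₁)

lemma card_column_not_two_one_two [NeZero n] (hS : (toroidalGrid 7 n).square.IsIndepSet S)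
    (hn : 3 ≤ n) (j : Fin n) :
    ¬(2 ≤ (column S j).card ∧ 1 ≤ (column S (j + 1)).card ∧
      2 ≤ (column S (j + 2)).card) := by
  have key : ∀ a a' b c c' : Fin 7, Fin.Apart 3 a a' → Fin.Apart 3 c c' →
      Fin.Apart 2 a b → Fin.Apart 2 a' b → Fin.Apart 2 b c → Fin.Apart 2 b c' →
      a ≠ c → a ≠ c' → a' ≠ c → a' = c' := by
    decide
  rintro ⟨h₀, h₁, h₂⟩
  obtain ⟨a, ha, a', ha', haa'⟩ := Finset.one_lt_card.mp h₀
  obtain ⟨b, hb⟩ := Finset.card_pos.mp h₁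
  obtain ⟨c, hc, c', hc', hcc'⟩ := Finset.one_lt_card.mp h₂
  have apart₃ := apart_three_of_mem_column hS (by norm_num)
  have apart₂ := apart_two_of_mem_column hS (by norm_num) (by omega)
  have ne := ne_of_mem_column hS hn
  have hc₁ : c ∈ column S (j + 1 + 1) := by rwa [Fin.add_one_add_one]
  have hc₁' : c' ∈ column S (j + 1 + 1) := by rwa [Fin.add_one_add_one]
  exact ne ha' hc' <| key a a' b c c' (apart₃ ha ha' haa') (apart₃ hc hc' hcc') (apart₂ ha hb)
    (apart₂ ha' hb) (apart₂ hb hc₁) (apart₂ hb hc₁') (ne ha hc) (ne ha hc') (ne ha' hc)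

lemma isAdmissibleProfile_card_column [NeZero n] (hS : (toroidalGrid 7 n).square.IsIndepSet S)
    (hn : 3 ≤ n) : IsAdmissibleProfile (Equiv.addRight 1) fun j => (column S j).card where
  le_two := card_column_le_two hS
  not_two_two := card_column_not_two_two hS (by omega)
  not_one_two_one j := by
    simpa [Fin.add_one_add_one] using card_column_not_one_two_one hS hn j
  not_two_one_two j := by
    simpa [Fin.add_one_add_one] using card_column_not_two_one_two hS hn j

lemma five_mul_card_le_of_isIndepSet [NeZero n] (hS : (toroidalGrid 7 n).square.IsIndepSet S)
    (hn : 3 ≤ n) : 5 * S.card ≤ 6 * n := by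
  simpa [sum_card_column] using (isAdmissibleProfile_card_column hS hn).five_mul_sum_le

end SevenRows

lemma toroidalGrid_seven_square_not_colorable_six {n : ℕ} (hn₁ : 7 ≤ n) (hn₂ : n ≤ 9) :
    ¬(toroidalGrid 7 n).square.Colorable 6 := by
  have : NeZero n := ⟨by omega⟩
  refine not_colorable_of_forall_isIndepSet_card_le (a := n + 1) (fun S hS => ?_) ?_
  · have := five_mul_card_le_of_isIndepSet hS (by omega)
    omega
  · simp only [Fintype.card_prod, Fintype.card_fin]
    omega

set_option maxRecDepth 10000 in
lemma toroidalGrid_seven_seven_square_colorable : (toroidalGrid 7 7).square.Colorable 7 := by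
  have valid : ∀ u v : Fin 7 × Fin 7, u.1 + 3 * u.2 = v.1 + 3 * v.2 →
      ¬(toroidalGrid 7 7).square.Adj u v := by
    decide
  exact ⟨Coloring.mk (fun v => v.1 + 3 * v.2) fun huv h => valid _ _ h huv⟩

set_option maxRecDepth 10000 in
lemma toroidalGrid_seven_eight_square_colorable : (toroidalGrid 7 8).square.Colorable 7 := by
  let shift : Fin 8 → Fin 7 := ![0, 3, 6, 2, 5, 1, 4, 2]
  have valid : ∀ u v : Fin 7 × Fin 8, u.1 + shift u.2 = v.1 + shift v.2 →
      ¬(toroidalGrid 7 8).square.Adj u v := by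
    decide
  exact ⟨Coloring.mk (fun v => v.1 + shift v.2) fun huv h => valid _ _ h huv⟩

theorem stmt18 :
    (toroidalGrid 7 7).square.chromaticNumber = 7 ∧
    (toroidalGrid 7 8).square.chromaticNumber = 7 := by
  rw [show (7 : ℕ∞) = (6 : ℕ) + 1 by norm_num, chromaticNumber_eq_iff_colorable_not_colorable,
    chromaticNumber_eq_iff_colorable_not_colorable]
  exact ⟨⟨toroidalGrid_seven_seven_square_colorable,
      toroidalGrid_seven_square_not_colorable_six le_rfl (by norm_num)⟩,
    ⟨toroidalGrid_seven_eight_square_colorable,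
      toroidalGrid_seven_square_not_colorable_six (by norm_num) (by norm_num)⟩⟩
end

section
/- The chromatic number of the square of T_{11,11} = C_{11} □ C_{11} is at most 6. -/
open SimpleGraph

/-!
The edges of `C_m □ C_n` are translations by `±(1, 0)` and `±(0, 1)`, so two vertices are
adjacent in the square exactly when they differ by a nonzero sum of at most two such steps.
Properness of a coloring of the square therefore reduces to comparing each vertex with its
translates by one or two steps; for the explicit 6-coloring of `T_{11,11}` below (found by
computer search) these are `121 × (4 + 16)` comparisons.
-/

namespace SimpleGraph

variable {V : Type*} [AddGroup V]

theorem square_colorable_of_steps {G : SimpleGraph V} {S : Set V}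
    (hG : ∀ ⦃u v⦄, G.Adj u v → ∃ s ∈ S, v = u + s) {k : ℕ} (c : V → Fin k)
    (h₁ : ∀ u, ∀ s ∈ S, c u ≠ c (u + s))
    (h₂ : ∀ u, ∀ s ∈ S, ∀ t ∈ S, u + s + t ≠ u → c u ≠ c (u + s + t)) :
    G.square.Colorable k := by
  refine ⟨Coloring.mk c fun {u v} huv => ?_⟩
  obtain ⟨hne, hadj | ⟨w, huw, hwv⟩⟩ := huv
  · obtain ⟨s, hs, rfl⟩ := hG hadj
    exact h₁ u s hs
  · obtain ⟨s, hs, rfl⟩ := hG huw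
    obtain ⟨t, ht, rfl⟩ := hG hwv
    exact h₂ u s hs t ht hne.symm

theorem cycleGraph_adj_sub {n : ℕ} {a b : Fin (n + 2)} (h : (cycleGraph (n + 2)).Adj a b) :
    b - a = 1 ∨ b - a = -1 := by
  rcases cycleGraph_adj.mp h with hab | hba
  · exact Or.inr (by rw [← neg_sub, hab])
  · exact Or.inl hba

end SimpleGraph

def torusSteps (m n : ℕ) : Finset (Fin (m + 2) × Fin (n + 2)) :=
  {(1, 0), (-1, 0), (0, 1), (0, -1)}

theorem toroidalGrid_adj_exists_step {m n : ℕ} {u v : Fin (m + 2) × Fin (n + 2)}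
    (h : (toroidalGrid (m + 2) (n + 2)).Adj u v) : ∃ s ∈ torusSteps m n, v = u + s := by
  refine ⟨v - u, ?_, (add_sub_cancel u v).symm⟩
  rcases h with ⟨hc, hu⟩ | ⟨hc, hu⟩ <;> rcases cycleGraph_adj_sub hc with hd | hd
  all_goals simp [torusSteps, Prod.ext_iff, hu, hd]

def torusColoring : Fin 11 × Fin 11 → Fin 6 := fun p =>
  ![![0, 3, 5, 0, 1, 3, 4, 2, 1, 4, 2], ![5, 4, 2, 3, 4, 5, 0, 3, 5, 0, 3],
    ![2, 0, 1, 5, 0, 2, 1, 4, 2, 1, 4], ![1, 3, 4, 2, 1, 4, 5, 0, 3, 5, 0],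
    ![4, 5, 0, 3, 5, 0, 3, 1, 4, 2, 3], ![0, 2, 1, 4, 2, 1, 4, 5, 0, 1, 5],
    ![1, 4, 5, 0, 3, 5, 0, 2, 3, 4, 2], ![5, 0, 3, 1, 4, 2, 3, 4, 1, 0, 3],
    ![2, 1, 4, 5, 0, 1, 5, 0, 2, 5, 4], ![3, 5, 0, 2, 3, 4, 2, 3, 4, 1, 0],
    ![4, 2, 1, 4, 5, 0, 1, 5, 0, 3, 5]] p.1 p.2

theorem torusColoring_ne_add_step :
    ∀ u, ∀ s ∈ torusSteps 9 9, torusColoring u ≠ torusColoring (u + s) := by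
  decide +kernel

theorem torusColoring_ne_add_two_steps :
    ∀ u, ∀ s ∈ torusSteps 9 9, ∀ t ∈ torusSteps 9 9,
      u + s + t ≠ u → torusColoring u ≠ torusColoring (u + s + t) := by
  decide +kernel

theorem stmt19 : (toroidalGrid 11 11).square.chromaticNumber ≤ 6 := by
  have hcol : (toroidalGrid 11 11).square.Colorable 6 :=
    square_colorable_of_steps (fun _ _ h => toroidalGrid_adj_exists_step h) torusColoring
      torusColoring_ne_add_step torusColoring_ne_add_two_steps
  exact_mod_cast hcol.chromaticNumber_le
end
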